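/- arXiv:0812.4656 — 6 statements merged into one kernel-verified Lean document; each statement's English description precedes it below -/
import Mathlib

section
/- The torus character of ℂ* × ℂ* acting on χ(J_{λ'}, J_λ(-D_∞ + α D_0 + β D_1)) equals char_{αβ}(λ',λ) := -∑_{i≥0}∑_{i'≥0} q^{β+1}·((q^{λ'_{i'}}-1)(q^{-λ_i}-1)/(q-1))·q'^{α+i'-i}(q'-1) + ∑_{i≥0} q^{β+1}·((q^{-λ_i}-1)/(q-1))·q'^{α-i} - ∑_{i'≥0} q^{β+1}·((q^{λ'_{i'}}-1)/(q-1))·q'^{α+i'+1} + q q'·((q^β-1)/(q-1))·((q'^α-1)/(q'-1)). -/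
/-! Write `K = qq'/((q-1)(q'-1))`. Since `ch a b = K (q^b - 1)(q'^a - 1)`, the character of a
pair of monomials `x^b y^a`, `x^b' y^a'` is a bilinear expression in them, evaluated at
`(q, q')`, `(q, 1)`, `(1, q')`, `(1, 1)` and at the inverse points. So the alternating sum over
the two resolutions only sees their classes
`P_λ(x, y) = ∑_{i ≤ t} x^{λ_i} y^i - y ∑_{i < t} x^{λ_i} y^i`, and since `λ_t = 0`,
`P_λ(x, y) = 1 + (1 - y) ∑_i (x^{λ_i} - 1) y^i`, which is `1` on the lines `x = 1` and `y = 1`.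
Expanding the pairing of `P_λ'` with `P_λ` gives the four terms of the formula. -/

open Finset

namespace MonomialIdealCharacter

variable {F : Type*} [Field F]

def torusChar (q q' : F) (a b : ℤ) : F :=
  q * q' * ((q ^ b - 1) / (q - 1)) * ((q' ^ a - 1) / (q' - 1))

def generatorSum (μ : ℕ → ℕ) (n : ℕ) (x y : F) : F := ∑ i ∈ range n, x ^ μ i * y ^ i

/-- `(x - 1)` times the generating function `∑_{(i, k) ∈ μ} x^k y^i` of the boxes of `μ`. -/
def boxSum (μ : ℕ → ℕ) (n : ℕ) (x y : F) : F := ∑ i ∈ range n, (x ^ μ i - 1) * y ^ i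

/-- `K * chiPairing q q' α β u v` is the character of `χ(u, v(-D_∞ + α D_0 + β D_1))`
when `u` and `v` are the classes of monomials `x^b y^a`, written as functions of `(x, y)`. -/
def chiPairing (q q' : F) (α β : ℤ) (u v : F → F → F) : F :=
  q ^ β * q' ^ α * u q q' * v q⁻¹ q'⁻¹ - q ^ β * u q 1 * v q⁻¹ 1
    - q' ^ α * u 1 q' * v 1 q'⁻¹ + u 1 1 * v 1 1

theorem torusChar_eq {q q' : F} (hq : q ≠ 0) (hq' : q' ≠ 0) (α β : ℤ) (a b a' b' : ℕ) :
    torusChar q q' ((a' : ℤ) - a + α) ((b' : ℤ) - b + β) =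
      q * q' / ((q - 1) * (q' - 1)) *
        chiPairing q q' α β (fun x y => x ^ b' * y ^ a') (fun x y => x ^ b * y ^ a) := by
  simp only [torusChar, chiPairing, one_pow, mul_one, inv_pow]
  rw [zpow_add₀ hq, zpow_sub₀ hq, zpow_add₀ hq', zpow_sub₀ hq']
  simp only [zpow_natCast]
  field_simp
  ring

theorem chiPairing_sum_sum (q q' : F) (α β : ℤ) (μ ν : ℕ → ℕ) (m n : ℕ) :
    chiPairing q q' α β (generatorSum μ m) (generatorSum ν n) =
      ∑ i ∈ range n, ∑ j ∈ range m,
        chiPairing q q' α β (fun x y => x ^ μ j * y ^ j) (fun x y => x ^ ν i * y ^ i) := by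
  simp only [chiPairing, generatorSum, mul_assoc, sum_mul_sum]
  simp only [mul_sum, ← sum_sub_distrib, ← sum_add_distrib]
  rw [sum_comm]

theorem sum_sum_torusChar {q q' : F} (hq : q ≠ 0) (hq' : q' ≠ 0) (α β : ℤ)
    (μ ν : ℕ → ℕ) (m n : ℕ) :
    ∑ i ∈ range n, ∑ j ∈ range m,
        torusChar q q' ((j : ℤ) - i + α) ((μ j : ℤ) - ν i + β) =
      q * q' / ((q - 1) * (q' - 1)) *
        chiPairing q q' α β (generatorSum μ m) (generatorSum ν n) := by
  simp only [chiPairing_sum_sum, mul_sum, torusChar_eq hq hq']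

theorem chiPairing_resolution {q q' : F} (hq' : q' ≠ 0) (α β : ℤ)
    (u₀ u₁ v₀ v₁ : F → F → F) :
    chiPairing q q' α β u₁ v₁ - chiPairing q q' (α + 1) β u₀ v₁
        - chiPairing q q' (α - 1) β u₁ v₀ + chiPairing q q' α β u₀ v₀ =
      chiPairing q q' α β (fun x y => u₁ x y - y * u₀ x y)
        (fun x y => v₁ x y - y * v₀ x y) := by
  simp only [chiPairing, zpow_add₀ hq', zpow_sub₀ hq', zpow_one]
  field_simp
  ring

theorem boxSum_one_left (μ : ℕ → ℕ) (n : ℕ) (y : F) : boxSum μ n 1 y = 0 := by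
  simp [boxSum]

theorem generatorSum_sub_mul {μ : ℕ → ℕ} {t : ℕ} (ht : μ t = 0) (x y : F) :
    generatorSum μ (t + 1) x y - y * generatorSum μ t x y =
      1 + (1 - y) * boxSum μ (t + 1) x y := by
  have hbox : boxSum μ (t + 1) x y =
      generatorSum μ (t + 1) x y - ∑ i ∈ range (t + 1), y ^ i := by
    simp only [boxSum, generatorSum, sub_mul, one_mul, sum_sub_distrib]
  have hgen : generatorSum μ (t + 1) x y = generatorSum μ t x y + y ^ t := by
    simp [generatorSum, sum_range_succ, ht]
  rw [hbox, hgen]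
  linear_combination mul_neg_geom_sum y (t + 1)

theorem chiPairing_one_add_mul {q q' : F} (α β : ℤ) (f g : F → F → F)
    (hf : ∀ y, f 1 y = 0) (hg : ∀ y, g 1 y = 0) :
    chiPairing q q' α β (fun x y => 1 + (1 - y) * f x y)
        (fun x y => 1 + (1 - y) * g x y) =
      q ^ β * q' ^ α * (1 + (1 - q') * f q q') * (1 + (1 - q'⁻¹) * g q⁻¹ q'⁻¹)
        - q ^ β - q' ^ α + 1 := by
  simp [chiPairing, hf, hg]

theorem sum_sum_eq_boxSum_mul_boxSum {q q' : F} (hq : q ≠ 0) (hq' : q' ≠ 0) (γ α : ℤ)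
    (μ ν : ℕ → ℕ) (m n : ℕ) :
    ∑ i ∈ range n, ∑ j ∈ range m,
        q ^ γ * ((q ^ (μ j : ℤ) - 1) * (q ^ (-(ν i : ℤ)) - 1) / (q - 1)) *
          q' ^ (α + (j : ℤ) - i) * (q' - 1) =
      q ^ γ * q' ^ α * (q' - 1) / (q - 1) * boxSum μ m q q' * boxSum ν n q⁻¹ q'⁻¹ := by
  rw [mul_assoc, mul_comm (boxSum μ m q q'), boxSum, boxSum, sum_mul_sum, mul_sum]
  refine sum_congr rfl fun i _ => ?_
  rw [mul_sum]
  refine sum_congr rfl fun j _ => ?_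
  simp only [zpow_sub₀ hq', zpow_add₀ hq', zpow_neg, zpow_natCast, inv_pow]
  field_simp

theorem sum_eq_boxSum_inv {q q' : F} (hq' : q' ≠ 0) (γ α : ℤ) (ν : ℕ → ℕ) (n : ℕ) :
    ∑ i ∈ range n, q ^ γ * ((q ^ (-(ν i : ℤ)) - 1) / (q - 1)) * q' ^ (α - (i : ℤ)) =
      q ^ γ * q' ^ α / (q - 1) * boxSum ν n q⁻¹ q'⁻¹ := by
  rw [boxSum, mul_sum]
  refine sum_congr rfl fun i _ => ?_
  simp only [zpow_sub₀ hq', zpow_neg, zpow_natCast, inv_pow]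
  field_simp

theorem sum_eq_boxSum {q q' : F} (hq' : q' ≠ 0) (γ α : ℤ) (μ : ℕ → ℕ) (m : ℕ) :
    ∑ j ∈ range m, q ^ γ * ((q ^ (μ j : ℤ) - 1) / (q - 1)) * q' ^ (α + (j : ℤ) + 1) =
      q ^ γ * q' ^ (α + 1) / (q - 1) * boxSum μ m q q' := by
  rw [boxSum, mul_sum]
  refine sum_congr rfl fun j _ => ?_
  rw [add_right_comm, zpow_add₀ hq', zpow_natCast, zpow_natCast]
  field_simp

end MonomialIdealCharacter

open MonomialIdealCharacter

theorem chi_character_of_monomial_ideals_general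
    {F : Type*} [Field F] (q q' : F)
    (hq0 : q ≠ 0) (hq'0 : q' ≠ 0) (hq1 : q ≠ 1) (hq'1 : q' ≠ 1)
    (lam lam' : ℕ → ℕ)
    (t t' : ℕ) (ht : ∀ i, t ≤ i → lam i = 0) (ht' : ∀ i, t' ≤ i → lam' i = 0)
    (α β : ℤ) :
    let ch : ℤ → ℤ → F := fun a b =>
      q * q' * ((q ^ b - 1)/(q - 1)) * ((q' ^ a - 1)/(q' - 1));
    (∑ i ∈ Finset.range (t+1), ∑ i' ∈ Finset.range (t'+1),
        ch ((i' : ℤ) - i + α) ((lam' i' : ℤ) - lam i + β))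
    - (∑ i ∈ Finset.range (t+1), ∑ i' ∈ Finset.range t',
        ch ((i' : ℤ) - i + 1 + α) ((lam' i' : ℤ) - lam i + β))
    - (∑ i ∈ Finset.range t, ∑ i' ∈ Finset.range (t'+1),
        ch ((i' : ℤ) - i - 1 + α) ((lam' i' : ℤ) - lam i + β))
    + (∑ i ∈ Finset.range t, ∑ i' ∈ Finset.range t',
        ch ((i' : ℤ) - i + α) ((lam' i' : ℤ) - lam i + β))
    =
    -(∑ i ∈ Finset.range (t+1), ∑ i' ∈ Finset.range (t'+1),
        q ^ (β + 1) * ((q ^ (lam' i' : ℤ) - 1) * (q ^ (-(lam i : ℤ)) - 1)/(q - 1))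
          * q' ^ (α + (i' : ℤ) - i) * (q' - 1))
    + (∑ i ∈ Finset.range (t+1),
        q ^ (β + 1) * ((q ^ (-(lam i : ℤ)) - 1)/(q - 1)) * q' ^ (α - (i : ℤ)))
    - (∑ i' ∈ Finset.range (t'+1),
        q ^ (β + 1) * ((q ^ (lam' i' : ℤ) - 1)/(q - 1)) * q' ^ (α + (i' : ℤ) + 1))
    + q * q' * ((q ^ β - 1)/(q - 1)) * ((q' ^ α - 1)/(q' - 1)) := by
  intro ch
  have hch : ch = torusChar q q' := rfl
  simp only [hch, show ∀ a b : ℤ, a - b + 1 + α = a - b + (α + 1) from fun _ _ => by ring,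
    show ∀ a b : ℤ, a - b - 1 + α = a - b + (α - 1) from fun _ _ => by ring]
  rw [sum_sum_torusChar hq0 hq'0, sum_sum_torusChar hq0 hq'0, sum_sum_torusChar hq0 hq'0,
    sum_sum_torusChar hq0 hq'0, ← mul_sub, ← mul_sub, ← mul_add, chiPairing_resolution hq'0]
  simp only [generatorSum_sub_mul (ht t le_rfl), generatorSum_sub_mul (ht' t' le_rfl)]
  rw [chiPairing_one_add_mul _ _ _ _ (boxSum_one_left _ _) (boxSum_one_left _ _),
    sum_sum_eq_boxSum_mul_boxSum hq0 hq'0, sum_eq_boxSum_inv hq'0, sum_eq_boxSum hq'0,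
    zpow_add₀ hq0, zpow_add₀ hq'0, zpow_one, zpow_one]
  have hq1' : q - 1 ≠ 0 := sub_ne_zero.2 hq1
  have hq'1' : q' - 1 ≠ 0 := sub_ne_zero.2 hq'1
  field_simp
  ring

/-- The torus character of `ℂ* × ℂ*` in
`χ(J_{λ'}, J_λ(-D_∞ + αD_0 + βD_1))`, computed from the monomial resolutions of the
ideals `J_λ, J_{λ'}` and `char_{a,b} = qq'((q^b-1)/(q-1))((q'^a-1)/(q'-1))`, equals the
claimed expression `char_{αβ}(λ',λ)` (with the infinite sums truncated at `t, t'`, beyond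
which all their terms vanish). -/
theorem chi_character_of_monomial_ideals
    {F : Type*} [Field F] (q q' : F)
    (hq0 : q ≠ 0) (hq'0 : q' ≠ 0) (hq1 : q ≠ 1) (hq'1 : q' ≠ 1)
    (lam lam' : ℕ → ℕ)
    (hmono : ∀ i, lam (i+1) ≤ lam i) (hmono' : ∀ i, lam' (i+1) ≤ lam' i)
    (t t' : ℕ) (ht : ∀ i, t ≤ i → lam i = 0) (ht' : ∀ i, t' ≤ i → lam' i = 0)
    (α β : ℤ) :
    let ch : ℤ → ℤ → F := fun a b =>
      q * q' * ((q ^ b - 1)/(q - 1)) * ((q' ^ a - 1)/(q' - 1));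
    (∑ i ∈ Finset.range (t+1), ∑ i' ∈ Finset.range (t'+1),
        ch ((i' : ℤ) - i + α) ((lam' i' : ℤ) - lam i + β))
    - (∑ i ∈ Finset.range (t+1), ∑ i' ∈ Finset.range t',
        ch ((i' : ℤ) - i + 1 + α) ((lam' i' : ℤ) - lam i + β))
    - (∑ i ∈ Finset.range t, ∑ i' ∈ Finset.range (t'+1),
        ch ((i' : ℤ) - i - 1 + α) ((lam' i' : ℤ) - lam i + β))
    + (∑ i ∈ Finset.range t, ∑ i' ∈ Finset.range t',
        ch ((i' : ℤ) - i + α) ((lam' i' : ℤ) - lam i + β))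
    =
    -(∑ i ∈ Finset.range (t+1), ∑ i' ∈ Finset.range (t'+1),
        q ^ (β + 1) * ((q ^ (lam' i' : ℤ) - 1) * (q ^ (-(lam i : ℤ)) - 1)/(q - 1))
          * q' ^ (α + (i' : ℤ) - i) * (q' - 1))
    + (∑ i ∈ Finset.range (t+1),
        q ^ (β + 1) * ((q ^ (-(lam i : ℤ)) - 1)/(q - 1)) * q' ^ (α - (i : ℤ)))
    - (∑ i' ∈ Finset.range (t'+1),
        q ^ (β + 1) * ((q ^ (lam' i' : ℤ) - 1)/(q - 1)) * q' ^ (α + (i' : ℤ) + 1))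
    + q * q' * ((q ^ β - 1)/(q - 1)) * ((q' ^ α - 1)/(q' - 1)) :=
  chi_character_of_monomial_ideals_general q q' hq0 hq'0 hq1 hq'1 lam lam' t t' ht ht' α β
end

section
/- The character expression for the fiber of the bundle E above a fixed point (d, d'), when specialized by letting q → 1, q' → 1 and all t_l → 1, equals ∑_{i≥j} d_{ij} + ∑_{i≥j} d'_{ij} = 2(d_1 + … + d_n); in particular the rank of E equals half the dimension 4(d_1+…+d_n) of P_d × P_d. -/
/-!
As `q → 1` we have `(q ^ a - 1) / (q - 1) → a` (the derivative of `q ^ a` at `1`), so the two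
double sums, which carry an extra factor `q ^ b - 1`, tend to `0`, while all weights in `t` and
`q'` tend to `1`. The remaining sums tend to `∑ d'_{k-1,l'}` and `∑ d_{kl}`. Reindexing
`k - 1 ↦ k` in the former is possible because the row sums of `d'` are `n`-periodic and the
entry `d'_{k-1,k-1-N}` lost by the truncation of the range of `l'` vanishes. The second identity
is the degree condition `d_k = d'_k`.
-/

open Filter Topology Finset

theorem sum_Icc_one_comp_sub_one {M : Type*} [AddCommGroup M] (G : ℤ → M) (n : ℕ) :
    ∑ k ∈ Icc (1 : ℤ) n, G (k - 1) = ∑ k ∈ Icc (1 : ℤ) n, G k + (G 0 - G n) := by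
  induction n with
  | zero => simp
  | succ m ih =>
    have hm : (1 : ℤ) ≤ m + 1 := by omega
    push_cast
    rw [← insert_Icc_right_eq_Icc_add_one hm, sum_insert (by simp), sum_insert (by simp), ih,
      add_sub_cancel_right]
    abel

theorem Function.Periodic.sum_Icc_one_comp_sub_one {M : Type*} [AddCommGroup M] {G : ℤ → M}
    {n : ℕ} (hG : Function.Periodic G n) :
    ∑ k ∈ Icc (1 : ℤ) n, G (k - 1) = ∑ k ∈ Icc (1 : ℤ) n, G k := by
  rw [_root_.sum_Icc_one_comp_sub_one, ← zero_add (n : ℤ), hG, sub_self, add_zero]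

theorem sum_Icc_eq_sum_Icc_sub_one_left {M : Type*} [AddCommMonoid M] {f : ℤ → M} {a : ℤ}
    (b : ℤ) (ha : f (a - 1) = 0) : ∑ l ∈ Icc a b, f l = ∑ l ∈ Icc (a - 1) b, f l := by
  refine sum_subset (Icc_subset_Icc_left (by omega)) fun l hl hl' => ?_
  rw [mem_Icc] at hl hl'
  rwa [show l = a - 1 by omega]

theorem sum_Icc_sum_Icc_prev_row_of_periodic {M : Type*} [AddCommGroup M] {n N : ℕ}
    {a : ℤ → ℤ → M} (hper : ∀ i j : ℤ, a (i + n) (j + n) = a i j)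
    (hvan : ∀ i : ℤ, a i (i - N) = 0) :
    ∑ k ∈ Icc (1 : ℤ) n, ∑ l ∈ Icc (k - N) (k - 1), a (k - 1) l
      = ∑ k ∈ Icc (1 : ℤ) n, ∑ l ∈ Icc (k - N) k, a k l := by
  have hrow_sums : Function.Periodic (fun m : ℤ => ∑ l ∈ Icc (m - N) m, a m l) n := fun m => by
    dsimp only
    rw [add_sub_right_comm, ← map_add_right_Icc, sum_map]
    simp [hper]
  rw [← hrow_sums.sum_Icc_one_comp_sub_one]
  refine sum_congr rfl fun k _ => ?_
  rw [sum_Icc_eq_sum_Icc_sub_one_left _ (by simpa [sub_right_comm] using hvan (k - 1)),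
    sub_right_comm]

section

variable {𝕜 : Type*} [NontriviallyNormedField 𝕜]

theorem tendsto_zpow_sub_one_div_sub_one (a : ℤ) :
    Tendsto (fun q : 𝕜 => (q ^ a - 1) / (q - 1)) (𝓝[≠] 1) (𝓝 a) := by
  have h := (hasDerivAt_zpow a (1 : 𝕜) (Or.inl one_ne_zero)).tendsto_slope
  rw [one_zpow, mul_one] at h
  exact h.congr fun q => by simp [slope_def_field]

theorem tendsto_zpow_sub_one_mul_zpow_sub_one_div_sub_one (a b : ℤ) :
    Tendsto (fun q : 𝕜 => (q ^ a - 1) * (q ^ b - 1) / (q - 1)) (𝓝[≠] 1) (𝓝 0) := by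
  have hb : Tendsto (fun q : 𝕜 => q ^ b - 1) (𝓝[≠] 1) (𝓝 0) := by
    have := (continuousAt_zpow₀ (1 : 𝕜) b (Or.inl one_ne_zero)).sub_const 1
    simpa using this.mono_left nhdsWithin_le_nhds
  simpa [mul_div_right_comm] using (tendsto_zpow_sub_one_div_sub_one a).mul hb

theorem tendsto_character_term_of_tendsto {R : 𝕜 → 𝕜} {L : 𝕜} (hR : Tendsto R (𝓝[≠] 1) (𝓝 L))
    (l l' e : ℤ) :
    Tendsto (fun P : 𝕜 × 𝕜 × (ℤ → 𝕜) => P.2.2 l ^ 2 / P.2.2 l' ^ 2 * P.1 * R P.1 * P.2.1 ^ e)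
      (𝓝[{P | P.1 ≠ 1}] (1, 1, fun _ => 1)) (𝓝 L) := by
  have hw : ContinuousAt (fun P : 𝕜 × 𝕜 × (ℤ → 𝕜) => P.2.2 l ^ 2 / P.2.2 l' ^ 2 * P.1)
      (1, 1, fun _ => 1) := by fun_prop (disch := simp)
  have hq' : ContinuousAt (fun P : 𝕜 × 𝕜 × (ℤ → 𝕜) => P.2.1 ^ e) (1, 1, fun _ => 1) := by
    fun_prop (disch := simp)
  have hq : Tendsto (fun P : 𝕜 × 𝕜 × (ℤ → 𝕜) => P.1) (𝓝[{P | P.1 ≠ 1}] (1, 1, fun _ => 1))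
      (𝓝[≠] 1) :=
    continuous_fst.continuousWithinAt.tendsto_nhdsWithin fun _ h => h
  simpa using ((hw.tendsto.mono_left nhdsWithin_le_nhds).mul (hR.comp hq)).mul
    (hq'.tendsto.mono_left nhdsWithin_le_nhds)

end

theorem rank_of_E_from_character_limit_general
    (n : ℕ) (N : ℕ)
    (d d' : ℤ → ℤ → ℕ)
    (hper' : ∀ i j : ℤ, d' (i + n) (j + n) = d' i j)
    (hvan' : ∀ i j : ℤ, (N : ℤ) ≤ i - j → d' i j = 0)
    (hdeg : ∀ k : ℤ, 1 ≤ k → k ≤ n →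
      ∑ l ∈ Finset.Icc (k - N) k, d k l = ∑ l ∈ Finset.Icc (k - N) k, d' k l) :
    let fl : ℤ → ℤ := fun l => Int.fdiv (-l) (n : ℤ);
    let charE : ℂ × ℂ × (ℤ → ℂ) → ℂ := fun P =>
      let q := P.1; let q' := P.2.1; let t := P.2.2;
      ∑ k ∈ Finset.Icc (1:ℤ) n,
        ((∑ l ∈ Finset.Icc (k - N) k, ∑ l' ∈ Finset.Icc (k - N) (k - 1),
            (t l ^ 2 / t l' ^ 2) * q *
              ((q ^ (d' (k-1) l' : ℤ) - 1) * (q ^ (-(d k l : ℤ)) - 1) / (q - 1)) *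
              q' ^ (fl l' - fl l))
        + (∑ l' ∈ Finset.Icc (k - N) (k - 1),
            (t k ^ 2 / t l' ^ 2) * q * ((q ^ (d' (k-1) l' : ℤ) - 1) / (q - 1)) *
              q' ^ (fl l' - fl k))
        - (∑ l ∈ Finset.Icc (k - N) k, ∑ l' ∈ Finset.Icc (k - N) k,
            (t l ^ 2 / t l' ^ 2) * q *
              ((q ^ (d' k l' : ℤ) - 1) * (q ^ (-(d k l : ℤ)) - 1) / (q - 1)) *
              q' ^ (fl l' - fl l))
        - (∑ l ∈ Finset.Icc (k - N) k,
            (t l ^ 2 / t k ^ 2) * q * ((q ^ (-(d k l : ℤ)) - 1) / (q - 1)) *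
              q' ^ (fl k - fl l)));
    Filter.Tendsto charE
        (nhdsWithin ((1 : ℂ), (1 : ℂ), fun _ : ℤ => (1 : ℂ)) {P | P.1 ≠ 1})
        (nhds ((∑ k ∈ Finset.Icc (1:ℤ) n, ∑ l ∈ Finset.Icc (k - N) k, (d k l : ℂ))
          + ∑ k ∈ Finset.Icc (1:ℤ) n, ∑ l ∈ Finset.Icc (k - N) k, (d' k l : ℂ)))
    ∧ (∑ k ∈ Finset.Icc (1:ℤ) n, ∑ l ∈ Finset.Icc (k - N) k, (d k l : ℂ))
        + (∑ k ∈ Finset.Icc (1:ℤ) n, ∑ l ∈ Finset.Icc (k - N) k, (d' k l : ℂ))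
      = 2 * ∑ k ∈ Finset.Icc (1:ℤ) n, ∑ l ∈ Finset.Icc (k - N) k, (d k l : ℂ) := by
  intro fl charE
  have hdeg' : ∀ k ∈ Icc (1 : ℤ) n,
      ∑ l ∈ Icc (k - N) k, (d k l : ℂ) = ∑ l ∈ Icc (k - N) k, (d' k l : ℂ) := fun k hk => by
    rw [mem_Icc] at hk
    exact_mod_cast hdeg k hk.1 hk.2
  refine ⟨?_, by rw [sum_congr rfl hdeg']; ring⟩
  have hlin := tendsto_zpow_sub_one_div_sub_one (𝕜 := ℂ)
  have hquad := tendsto_zpow_sub_one_mul_zpow_sub_one_div_sub_one (𝕜 := ℂ)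
  convert tendsto_finsetSum (Icc (1 : ℤ) n) fun k _ =>
    (((tendsto_finsetSum (Icc (k - N) k) fun l _ =>
      tendsto_finsetSum (Icc (k - N) (k - 1)) fun l' _ =>
        tendsto_character_term_of_tendsto (hquad (d' (k - 1) l') (-(d k l : ℤ)))
          l l' (fl l' - fl l)).add
      (tendsto_finsetSum (Icc (k - N) (k - 1)) fun l' _ =>
        tendsto_character_term_of_tendsto (hlin (d' (k - 1) l')) k l' (fl l' - fl k))).sub
      (tendsto_finsetSum (Icc (k - N) k) fun l _ => tendsto_finsetSum (Icc (k - N) k) fun l' _ =>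
        tendsto_character_term_of_tendsto (hquad (d' k l') (-(d k l : ℤ)))
          l l' (fl l' - fl l))).sub
      (tendsto_finsetSum (Icc (k - N) k) fun l _ =>
        tendsto_character_term_of_tendsto (hlin (-(d k l : ℤ))) l k (fl k - fl l)) using 2
  simp only [sum_const_zero, zero_add, sub_zero, Int.cast_neg, Int.cast_natCast, sum_neg_distrib,
    sub_neg_eq_add, sum_add_distrib]
  rw [sum_Icc_sum_Icc_prev_row_of_periodic (a := fun i j => (d' i j : ℂ))
    (by simp [hper']) fun i => by simp [hvan' i (i - N) (by omega)], add_comm]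

/-- Specializing the torus character of the fiber of the bundle `E` above the
fixed point `(d, d')` by letting `q → 1`, `q' → 1` and all `t_l → 1` yields
`∑_{i≥j} d_{ij} + ∑_{i≥j} d'_{ij} = 2(d_1 + … + d_n)`: the rank of `E` is half the
dimension of `P_d × P_d`.  (The sums over `l ≤ k` are truncated at a bound `N` beyond which
all entries, and hence all summands, vanish.) -/
theorem rank_of_E_from_character_limit
    (n : ℕ) (hn : 0 < n) (N : ℕ)
    (d d' : ℤ → ℤ → ℕ)
    (hmono : ∀ i k j : ℤ, j ≤ k → k ≤ i → d i j ≤ d k j)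
    (hmono' : ∀ i k j : ℤ, j ≤ k → k ≤ i → d' i j ≤ d' k j)
    (hper : ∀ i j : ℤ, d (i + n) (j + n) = d i j)
    (hper' : ∀ i j : ℤ, d' (i + n) (j + n) = d' i j)
    (hvan : ∀ i j : ℤ, (N : ℤ) ≤ i - j → d i j = 0)
    (hvan' : ∀ i j : ℤ, (N : ℤ) ≤ i - j → d' i j = 0)
    (hdeg : ∀ k : ℤ, 1 ≤ k → k ≤ n →
      ∑ l ∈ Finset.Icc (k - N) k, d k l = ∑ l ∈ Finset.Icc (k - N) k, d' k l) :
    let fl : ℤ → ℤ := fun l => Int.fdiv (-l) (n : ℤ);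
    let charE : ℂ × ℂ × (ℤ → ℂ) → ℂ := fun P =>
      let q := P.1; let q' := P.2.1; let t := P.2.2;
      ∑ k ∈ Finset.Icc (1:ℤ) n,
        ((∑ l ∈ Finset.Icc (k - N) k, ∑ l' ∈ Finset.Icc (k - N) (k - 1),
            (t l ^ 2 / t l' ^ 2) * q *
              ((q ^ (d' (k-1) l' : ℤ) - 1) * (q ^ (-(d k l : ℤ)) - 1) / (q - 1)) *
              q' ^ (fl l' - fl l))
        + (∑ l' ∈ Finset.Icc (k - N) (k - 1),
            (t k ^ 2 / t l' ^ 2) * q * ((q ^ (d' (k-1) l' : ℤ) - 1) / (q - 1)) *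
              q' ^ (fl l' - fl k))
        - (∑ l ∈ Finset.Icc (k - N) k, ∑ l' ∈ Finset.Icc (k - N) k,
            (t l ^ 2 / t l' ^ 2) * q *
              ((q ^ (d' k l' : ℤ) - 1) * (q ^ (-(d k l : ℤ)) - 1) / (q - 1)) *
              q' ^ (fl l' - fl l))
        - (∑ l ∈ Finset.Icc (k - N) k,
            (t l ^ 2 / t k ^ 2) * q * ((q ^ (-(d k l : ℤ)) - 1) / (q - 1)) *
              q' ^ (fl k - fl l)));
    Filter.Tendsto charE
        (nhdsWithin ((1 : ℂ), (1 : ℂ), fun _ : ℤ => (1 : ℂ)) {P | P.1 ≠ 1})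
        (nhds ((∑ k ∈ Finset.Icc (1:ℤ) n, ∑ l ∈ Finset.Icc (k - N) k, (d k l : ℂ))
          + ∑ k ∈ Finset.Icc (1:ℤ) n, ∑ l ∈ Finset.Icc (k - N) k, (d' k l : ℂ)))
    ∧ (∑ k ∈ Finset.Icc (1:ℤ) n, ∑ l ∈ Finset.Icc (k - N) k, (d k l : ℂ))
        + (∑ k ∈ Finset.Icc (1:ℤ) n, ∑ l ∈ Finset.Icc (k - N) k, (d' k l : ℂ))
      = 2 * ∑ k ∈ Finset.Icc (1:ℤ) n, ∑ l ∈ Finset.Icc (k - N) k, (d k l : ℂ) :=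
  rank_of_E_from_character_limit_general n N d d' hper' hvan' hdeg
end

section
/- For 1 ≤ i ≤ n-1 the generating series identity a_{0i}(u) = ∏_{j=0}^{i-1} a_{01}(u-j) · ∏_{j=1}^{i-1} ∏_{l=1}^{i-j} h_j(u - l - (j-1)/2) follows by induction from the defining relations a_{0i}(u+(i-1)/2)^{-1} a_{0i}(u+(i+1)/2)^{-1} a_{0,i-1}(u+(i-1)/2) a_{0,i+1}(u+(i+1)/2) = h_i(u) and a_{00}(u) = 1. -/
/-!
Write `σ = S (-1)`. Shifting the relation for `a (k + 1)` by `-(k + 2) / 2` turns it into the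
three-term recurrence `σ (a k) * a (k + 2) = S (-1 - k / 2) (h (k + 1)) * σ (a (k + 1)) * a (k + 1)`,
which determines `a (k + 2)` from `a k` and `a (k + 1)` because `a k` is a unit. The product formula
`P` satisfies `P (m + 1) = a 1 * (∏ j ∈ Icc 1 m, S (-1 - (j - 1) / 2) (h j)) * σ (P m)`, hence the
same recurrence, and it agrees with `a` at `0` and `1`.
-/

open Finset

theorem eq_of_recurrence {M : Type*} [Monoid M] (σ : M → M) (g : ℕ → M → M → M)
    {x y : ℕ → M} {N : ℕ} (hunit : ∀ k, IsUnit (σ (x k)))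
    (h0 : x 0 = y 0) (h1 : x 1 = y 1)
    (hx : ∀ k, k + 2 ≤ N → σ (x k) * x (k + 2) = g k (x k) (x (k + 1)))
    (hy : ∀ k, σ (y k) * y (k + 2) = g k (y k) (y (k + 1))) :
    ∀ k ≤ N, x k = y k := by
  have consecutive : ∀ k, k + 1 ≤ N → x k = y k ∧ x (k + 1) = y (k + 1) := by
    intro k
    induction k with
    | zero => exact fun _ ↦ ⟨h0, h1⟩
    | succ k ih =>
      intro hk
      obtain ⟨e₀, e₁⟩ := ih (by omega)
      refine ⟨e₁, (hunit k).mul_left_cancel ?_⟩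
      rw [hx k (by omega), e₀, e₁, ← hy]
  rintro (_ | k) hk
  · exact h0
  · exact (consecutive k hk).2

section Shift

variable {R F : Type*} [EquivLike F R R] (S : ℚ → F)

theorem shift_zero_apply (hS : ∀ (c c' : ℚ) (r : R), S (c + c') r = S c (S c' r)) (r : R) :
    S 0 r = r :=
  EquivLike.injective (S 0) (by rw [← hS, add_zero])

variable [CommMonoid R] [MulEquivClass F R R]

def productFormula (a₁ : R) (h : ℕ → R) (m : ℕ) : R :=
  (∏ j ∈ range m, S (-(j : ℚ)) a₁) *
    ∏ j ∈ Icc 1 (m - 1), ∏ l ∈ Icc 1 (m - j), S (-(l : ℚ) - ((j : ℚ) - 1) / 2) (h j)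

variable (hS : ∀ (c c' : ℚ) (r : R), S (c + c') r = S c (S c' r))
include hS

theorem prod_range_shift_succ (x : R) (m : ℕ) :
    ∏ j ∈ range (m + 1), S (-(j : ℚ)) x = x * S (-1) (∏ j ∈ range m, S (-(j : ℚ)) x) := by
  rw [prod_range_succ', map_prod, Nat.cast_zero, neg_zero, shift_zero_apply S hS, mul_comm]
  congr 1
  refine prod_congr rfl fun j _ ↦ ?_
  rw [← hS]
  push_cast
  ring_nf

theorem prod_Icc_shift_succ (c : ℚ) (x : R) (m : ℕ) :
    ∏ l ∈ Icc 1 (m + 1), S (-(l : ℚ) - c) x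
      = S (-1 - c) x * S (-1) (∏ l ∈ Icc 1 m, S (-(l : ℚ) - c) x) := by
  induction m with
  | zero => simp
  | succ m ih =>
    conv_lhs => rw [prod_Icc_succ_top (by omega), ih]
    rw [prod_Icc_succ_top (by omega), map_mul, ← hS, mul_assoc]
    push_cast
    ring_nf

theorem prod_triangle_shift_succ (h : ℕ → R) (m : ℕ) :
    ∏ j ∈ Icc 1 m, ∏ l ∈ Icc 1 (m + 1 - j), S (-(l : ℚ) - ((j : ℚ) - 1) / 2) (h j)
      = (∏ j ∈ Icc 1 m, S (-1 - ((j : ℚ) - 1) / 2) (h j)) *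
        S (-1) (∏ j ∈ Icc 1 (m - 1), ∏ l ∈ Icc 1 (m - j), S (-(l : ℚ) - ((j : ℚ) - 1) / 2) (h j)) := by
  have peel : ∀ j ∈ Icc 1 m, ∏ l ∈ Icc 1 (m + 1 - j), S (-(l : ℚ) - ((j : ℚ) - 1) / 2) (h j)
      = S (-1 - ((j : ℚ) - 1) / 2) (h j) *
        S (-1) (∏ l ∈ Icc 1 (m - j), S (-(l : ℚ) - ((j : ℚ) - 1) / 2) (h j)) := by
    intro j hj
    rw [mem_Icc] at hj
    rw [show m + 1 - j = m - j + 1 by omega, prod_Icc_shift_succ S hS]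
  rw [prod_congr rfl peel, prod_mul_distrib, map_prod]
  congr 1
  -- the row `j = m` of the triangle is empty
  refine (prod_subset (Icc_subset_Icc_right (Nat.sub_le m 1)) fun j hj hj' ↦ ?_).symm
  simp only [mem_Icc] at hj hj'
  rw [show m - j = 0 by omega, Icc_eq_empty (by omega), prod_empty, map_one]

theorem productFormula_succ (a₁ : R) (h : ℕ → R) (m : ℕ) :
    productFormula S a₁ h (m + 1)
      = a₁ * (∏ j ∈ Icc 1 m, S (-1 - ((j : ℚ) - 1) / 2) (h j)) * S (-1) (productFormula S a₁ h m) := by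
  rw [productFormula, productFormula, Nat.add_sub_cancel, prod_range_shift_succ S hS,
    prod_triangle_shift_succ S hS, map_mul]
  ac_rfl

theorem productFormula_recurrence (a₁ : R) (h : ℕ → R) (k : ℕ) :
    S (-1) (productFormula S a₁ h k) * productFormula S a₁ h (k + 2)
      = S (-1 - (k : ℚ) / 2) (h (k + 1)) * S (-1) (productFormula S a₁ h (k + 1))
        * productFormula S a₁ h (k + 1) := by
  rw [productFormula_succ S hS _ _ (k + 1), productFormula_succ S hS _ _ k, map_mul, map_mul,
    prod_Icc_succ_top (by omega), show -1 - (((k + 1 : ℕ) : ℚ) - 1) / 2 = -1 - (k : ℚ) / 2 by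
      push_cast; ring]
  ac_rfl

theorem shift_recurrence {c : ℚ} {t x y z : R}
    (e : t * S c y * S (c + 1) y = S c x * S (c + 1) z) :
    S (-1 - c) t * S (-1) y * y = S (-1) x * z := by
  simpa only [map_mul, ← hS, show -1 - c + c = -1 by ring, show -1 - c + (c + 1) = 0 by ring,
    shift_zero_apply S hS] using congrArg (S (-1 - c)) e

end Shift

/-- In a commutative ring of formal series on which the shifts `u ↦ u + c`
act as ring automorphisms `S c`, if `a_{00}(u) = 1` and for `1 ≤ i ≤ n-1`
`h_i(u) = a_{0i}(u+(i-1)/2)^{-1} a_{0i}(u+(i+1)/2)^{-1} a_{0,i-1}(u+(i-1)/2) a_{0,i+1}(u+(i+1)/2)`,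
then `a_{0i}(u) = ∏_{j=0}^{i-1} a_{01}(u-j) · ∏_{j=1}^{i-1} ∏_{l=1}^{i-j} h_j(u-l-(j-1)/2)`. -/
theorem a0i_in_terms_of_a01_and_h
    {R : Type*} [CommRing R] (S : ℚ → R ≃+* R)
    (hS : ∀ (c c' : ℚ) (r : R), S (c + c') r = S c (S c' r))
    (n : ℕ) (a h : ℕ → R)
    (hu : ∀ i, IsUnit (a i))
    (ha0 : a 0 = 1)
    (hrec : ∀ i : ℕ, 1 ≤ i → i ≤ n - 1 →
      h i * S (((i : ℚ) - 1)/2) (a i) * S (((i : ℚ) + 1)/2) (a i)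
        = S (((i : ℚ) - 1)/2) (a (i - 1)) * S (((i : ℚ) + 1)/2) (a (i + 1))) :
    ∀ i : ℕ, 1 ≤ i → i ≤ n - 1 →
      a i = (∏ j ∈ Finset.range i, S (-(j : ℚ)) (a 1))
        * ∏ j ∈ Finset.Icc 1 (i - 1), ∏ l ∈ Finset.Icc 1 (i - j),
            S (-(l : ℚ) - ((j : ℚ) - 1)/2) (h j) := by
  intro i _ hi
  refine eq_of_recurrence (S (-1))
    (fun k _ q ↦ S (-1 - (k : ℚ) / 2) (h (k + 1)) * S (-1) q * q) (fun k ↦ (hu k).map (S (-1)))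
    ?_ ?_ (fun k hk ↦ ?_) (productFormula_recurrence S hS (a 1) h) i hi
  · simp [ha0, productFormula]
  · simp [productFormula, shift_zero_apply S hS]
  · have e := hrec (k + 1) (by omega) (by omega)
    rw [Nat.add_sub_cancel, show (((k + 1 : ℕ) : ℚ) - 1) / 2 = (k : ℚ) / 2 by push_cast; ring,
      show (((k + 1 : ℕ) : ℚ) + 1) / 2 = (k : ℚ) / 2 + 1 by push_cast; ring] at e
    exact (shift_recurrence S hS e).symm
end

section
/- Suppose series a_{0i}(u) for all i ∈ ℤ≥0 satisfy a_{0,i+n}(u)·a_{0,n}(u)^{-1} = a_{0i}(u + κ) for a fixed shift parameter κ and the recursions h_i(u) = a_{0i}(u+(i-1)/2)^{-1} a_{0i}(u+(i+1)/2)^{-1} a_{0,i-1}(u+(i-1)/2) a_{0,i+1}(u+(i+1)/2). Then a_{01} satisfies the functional equation a_{01}(u-n)·∏_{j=1}^n h_j(u-n+(j-1)/2) = a_{01}(u+κ), and when κ ≠ -n this equation uniquely determines a_{01}(u) given the h_j(u) (among series of the fixed form). -/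
open PowerSeries

/-!
Write `a_{0i}(u) = u ^ i g_i(u⁻¹)`. Every shift `u ↦ u + c` acts on `F⟦X⟧` as the ring
endomorphism substituting `X / (1 + c X)`, and these endomorphisms compose additively in `c`.
Shifting the `i`-th recursion by `(i - 1)/2 - n` puts it in the form
`H_i b_{i-1} a_i = a_{i-1} b_i` with `a_i = a_{0i}(u + i - n)`, `b_i = a_{0,i+1}(u + i - n)`,
so the product of the `H_i` telescopes to `a_{0,n+1}(u) / (a_{0n}(u) a_{01}(u - n))`, and the
periodicity for `i = 1` identifies this with `a_{01}(u + κ) / a_{01}(u - n)`.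
For uniqueness, the ratio `R` of two solutions satisfies `R(u - n) = R(u + κ)`, so it is fixed
by the nonzero shift `κ + n`. A shift by `c` adds `-c K D_K` to the coefficient `D_{K+1}`
of a series `D` starting in degree `K`, so a series fixed by a nonzero shift is constant.
-/

/-- The shift `u ↦ u + c` acting on the normalized part `g(u^{-1})` of a series in `u^{-1}`:
in the variable `X = u^{-1}` it is the substitution `X ↦ X/(1+cX)`, given on coefficients by
`(S_c g)_k = ∑_{m≤k} g_m (-c)^{k-m} C(k-1, k-m)`. -/
noncomputable def shiftPS {F : Type*} [Field F] (c : F) (g : PowerSeries F) : PowerSeries F :=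
  PowerSeries.mk fun k => ∑ m ∈ Finset.range (k + 1),
    (PowerSeries.coeff (R := F) m g) * (-c) ^ (k - m) * (Nat.choose (k - 1) (k - m) : F)

theorem Finset.prod_Icc_one_mul_mul_eq_of_mul_mul_eq {M : Type*} [CommMonoidWithZero M]
    [IsRightCancelMulZero M] {H a b : ℕ → M} (hb : ∀ i, b i ≠ 0)
    (hrec : ∀ i, H (i + 1) * b i * a (i + 1) = a i * b (i + 1)) (t : ℕ) :
    (∏ i ∈ Icc 1 t, H i) * b 0 * a t = a 0 * b t := by
  induction t with
  | zero => simp [mul_comm]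
  | succ t ih =>
    refine mul_right_cancel₀ (hb t) ?_
    rw [prod_Icc_succ_top (Nat.le_add_left 1 t)]
    calc (∏ i ∈ Icc 1 t, H i) * H (t + 1) * b 0 * a (t + 1) * b t
        = (∏ i ∈ Icc 1 t, H i) * b 0 * (H (t + 1) * b t * a (t + 1)) := by ac_rfl
      _ = (∏ i ∈ Icc 1 t, H i) * b 0 * a t * b (t + 1) := by rw [hrec]; ac_rfl
      _ = a 0 * b (t + 1) * b t := by rw [ih]; ac_rfl

section Shift

variable {F : Type*} [Field F]

theorem one_add_C_mul_X_ne_zero (c : F) : (1 + C c * X : F⟦X⟧) ≠ 0 := by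
  intro h
  simpa using congrArg constantCoeff h

noncomputable def shiftVar (c : F) : F⟦X⟧ := X * (1 + C c * X)⁻¹

theorem shiftVar_mul (c : F) : shiftVar c * (1 + C c * X) = X := by
  rw [shiftVar, mul_assoc, PowerSeries.inv_mul_cancel _ (by simp), mul_one]

theorem hasSubst_shiftVar (c : F) : HasSubst (shiftVar c) :=
  HasSubst.of_constantCoeff_zero' (by simp [shiftVar])

theorem shiftVar_pow (c : F) (m : ℕ) :
    shiftVar c ^ m = X ^ m * rescale (-c) (invOneSubPow F m).val := by
  refine mul_right_cancel₀ (pow_ne_zero m (one_add_C_mul_X_ne_zero c)) ?_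
  have h : rescale (-c) (1 - X : F⟦X⟧) = 1 + C c * X := by simp [sub_eq_add_neg]
  rw [← mul_pow, shiftVar_mul, mul_assoc, ← h, ← map_pow, ← map_mul,
    ← invOneSubPow_inv_eq_one_sub_pow, Units.val_inv, map_one, mul_one]

theorem coeff_shiftVar_pow (c : F) (m k : ℕ) :
    coeff k (shiftVar c ^ m) =
      if m ≤ k then (-c) ^ (k - m) * (Nat.choose (k - 1) (k - m) : F) else 0 := by
  rcases Nat.eq_zero_or_pos m with rfl | hm
  · rcases Nat.eq_zero_or_pos k with rfl | hk
    · simp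
    · simp [coeff_one, hk.ne', Nat.choose_eq_zero_of_lt (Nat.sub_lt hk one_pos)]
  · rw [shiftVar_pow, coeff_X_pow_mul', coeff_rescale,
      invOneSubPow_val_eq_mk_sub_one_add_choose_of_pos F m hm, coeff_mk]
    split_ifs with hmk
    · rw [show m - 1 + (k - m) = k - 1 by omega,
        Nat.choose_symm_of_eq_add (show k - 1 = (m - 1) + (k - m) by omega)]
    · rfl

theorem shiftPS_eq_subst (c : F) (g : F⟦X⟧) : shiftPS c g = g.subst (shiftVar c) := by
  ext k
  rw [coeff_subst' (hasSubst_shiftVar c), shiftPS, coeff_mk,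
    finsum_eq_sum_of_support_subset _ (s := Finset.range (k + 1)) ?_]
  · refine Finset.sum_congr rfl fun m hm => ?_
    rw [coeff_shiftVar_pow, if_pos (Nat.lt_succ_iff.mp (Finset.mem_range.mp hm)), smul_eq_mul,
      mul_assoc]
  · refine fun m hm => Finset.mem_coe.mpr (Finset.mem_range.mpr (Nat.lt_succ_of_le ?_))
    by_contra hmk
    exact hm (by simp only [coeff_shiftVar_pow, if_neg hmk, smul_zero])

noncomputable def shiftAlgHom (c : F) : F⟦X⟧ →ₐ[F] F⟦X⟧ := substAlgHom (hasSubst_shiftVar c)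

theorem coe_shiftAlgHom (c : F) : ⇑(shiftAlgHom c) = shiftPS c := by
  ext1 g
  rw [shiftAlgHom, coe_substAlgHom, shiftPS_eq_subst]

theorem shiftPS_one (c : F) : shiftPS c 1 = 1 := by
  rw [← coe_shiftAlgHom, map_one]

theorem shiftPS_mul (c : F) (f g : F⟦X⟧) : shiftPS c (f * g) = shiftPS c f * shiftPS c g := by
  rw [← coe_shiftAlgHom, map_mul]

theorem shiftPS_pow (c : F) (f : F⟦X⟧) (i : ℕ) : shiftPS c (f ^ i) = shiftPS c f ^ i := by
  rw [← coe_shiftAlgHom, map_pow]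

theorem shiftPS_sub (c : F) (f g : F⟦X⟧) : shiftPS c (f - g) = shiftPS c f - shiftPS c g := by
  rw [← coe_shiftAlgHom, map_sub]

theorem shiftPS_X (c : F) : shiftPS c X = shiftVar c := by
  rw [shiftPS_eq_subst, subst_X (hasSubst_shiftVar c)]

theorem shiftPS_C (c a : F) : shiftPS c (C a) = C a := by
  rw [← coe_shiftAlgHom, ← algebraMap_eq, AlgHom.commutes]

theorem shiftPS_zero (g : F⟦X⟧) : shiftPS 0 g = g := by
  rw [shiftPS_eq_subst, show shiftVar (0 : F) = X by simp [shiftVar], X_subst]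

theorem constantCoeff_shiftPS (c : F) (g : F⟦X⟧) :
    constantCoeff (shiftPS c g) = constantCoeff g := by
  rw [← coeff_zero_eq_constantCoeff_apply, ← coeff_zero_eq_constantCoeff_apply, shiftPS, coeff_mk]
  simp

theorem shiftPS_one_add_C_mul_X (c d : F) :
    shiftPS d (1 + C c * X) * (1 + C d * X) = 1 + C (c + d) * X := by
  rw [← coe_shiftAlgHom, map_add, map_one, map_mul, coe_shiftAlgHom, shiftPS_C, shiftPS_X,
    map_add]
  linear_combination C c * shiftVar_mul d

theorem shiftPS_shiftVar (c d : F) : shiftPS d (shiftVar c) = shiftVar (c + d) := by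
  refine mul_right_cancel₀ (one_add_C_mul_X_ne_zero (c + d)) ?_
  rw [shiftVar_mul, ← shiftPS_one_add_C_mul_X, ← mul_assoc, ← shiftPS_mul, shiftVar_mul,
    shiftPS_X, shiftVar_mul]

theorem shiftPS_shiftPS (c d : F) (g : F⟦X⟧) : shiftPS d (shiftPS c g) = shiftPS (c + d) g := by
  rw [shiftPS_eq_subst, shiftPS_eq_subst,
    subst_comp_subst_apply (hasSubst_shiftVar c) (hasSubst_shiftVar d),
    ← shiftPS_eq_subst, shiftPS_shiftVar, shiftPS_eq_subst]

/-- For `a(u) = u ^ i f(u⁻¹)` one has `a(u + e) = u ^ i (shiftDeg i e f)(u⁻¹)`. -/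
noncomputable def shiftDeg (i : ℕ) (e : F) (f : F⟦X⟧) : F⟦X⟧ := (1 + C e * X) ^ i * shiftPS e f

theorem shiftDeg_zero (i : ℕ) (f : F⟦X⟧) : shiftDeg i 0 f = f := by
  simp [shiftDeg, shiftPS_zero]

theorem constantCoeff_shiftDeg (i : ℕ) (e : F) (f : F⟦X⟧) :
    constantCoeff (shiftDeg i e f) = constantCoeff f := by
  simp [shiftDeg, constantCoeff_shiftPS]

theorem shiftDeg_ne_zero (i : ℕ) (e : F) {f : F⟦X⟧} (hf : constantCoeff f ≠ 0) :
    shiftDeg i e f ≠ 0 :=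
  fun h => hf (by rw [← constantCoeff_shiftDeg i e, h, map_zero])

theorem shiftPS_shiftDeg (i : ℕ) (e d : F) (f : F⟦X⟧) :
    shiftPS d (shiftDeg i e f) * (1 + C d * X) ^ i = shiftDeg i (e + d) f := by
  rw [shiftDeg, shiftDeg, shiftPS_mul, shiftPS_pow, shiftPS_shiftPS, ← shiftPS_one_add_C_mul_X,
    mul_pow]
  ring

theorem shiftPS_mul_shiftDeg_mul_shiftDeg {h p q r s : F⟦X⟧} {i k i' k' : ℕ}
    (hik : i + k = i' + k') {α β : F}
    (H : h * shiftDeg i α p * shiftDeg k β q = shiftDeg i' α r * shiftDeg k' β s)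
    (d : F) :
    shiftPS d h * shiftDeg i (α + d) p * shiftDeg k (β + d) q
      = shiftDeg i' (α + d) r * shiftDeg k' (β + d) s := by
  have H' := congrArg (shiftPS d) H
  simp only [shiftPS_mul] at H'
  have hpow : (1 + C d * X) ^ i' * (1 + C d * X) ^ k' = (1 + C d * X) ^ i * (1 + C d * X) ^ k := by
    rw [← pow_add, ← pow_add, hik]
  rw [← shiftPS_shiftDeg, ← shiftPS_shiftDeg, ← shiftPS_shiftDeg, ← shiftPS_shiftDeg]
  linear_combination (1 + C d * X) ^ i * (1 + C d * X) ^ k * H'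
    - shiftPS d (shiftDeg i' α r) * shiftPS d (shiftDeg k' β s) * hpow

theorem coeff_succ_shiftPS {c : F} {D : F⟦X⟧} {K : ℕ} (hD : ∀ j < K, coeff j D = 0) :
    coeff (K + 1) (shiftPS c D) = coeff (K + 1) D - c * K * coeff K D := by
  rw [shiftPS, coeff_mk, Finset.sum_range_succ, Finset.sum_range_succ,
    Finset.sum_eq_zero fun m hm => by rw [hD m (Finset.mem_range.mp hm), zero_mul, zero_mul]]
  simp only [Nat.add_sub_cancel_left, Nat.sub_self, Nat.choose_one_right, Nat.choose_zero_right,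
    Nat.add_sub_cancel, pow_one, pow_zero]
  push_cast
  ring

theorem eq_C_of_shiftPS_eq_self [CharZero F] {c : F} (hc : c ≠ 0) {R : F⟦X⟧}
    (hR : shiftPS c R = R) : R = C (constantCoeff R) := by
  set D := R - C (constantCoeff R)
  have hD : shiftPS c D = D := by rw [shiftPS_sub, hR, shiftPS_C]
  have hcoeff : ∀ K, coeff K D = 0 := by
    intro K
    induction K using Nat.strong_induction_on with
    | _ K ih =>
      rcases K with _ | K
      · simp [D]
      · have h := coeff_succ_shiftPS (c := c) (K := K + 1) ih
        rw [hD] at h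
        have h0 : c * ((K + 1 : ℕ) : F) * coeff (K + 1) D = 0 := by linear_combination h
        simpa [hc, Nat.cast_add_one_ne_zero] using h0
  rw [← sub_eq_zero]
  exact ext fun K => by rw [hcoeff, map_zero]

theorem eq_of_mul_shiftPS_mul_eq [CharZero F] {c d : F} (hcd : c ≠ d) {u v P G G' : F⟦X⟧}
    (hv : v ≠ 0) (hG : constantCoeff G = 1) (hG' : constantCoeff G' = 1)
    (h : u * shiftPS c G * P = v * shiftPS d G) (h' : u * shiftPS c G' * P = v * shiftPS d G') :
    G = G' := by
  obtain ⟨R, hG'R⟩ : ∃ R, G' = R * G :=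
    ⟨G' * G⁻¹, by rw [mul_assoc, PowerSeries.inv_mul_cancel _ (by simp [hG]), mul_one]⟩
  have hR0 : constantCoeff R = 1 := by simpa [hG, hG'] using (congrArg constantCoeff hG'R).symm
  have hvG : v * shiftPS d G ≠ 0 :=
    mul_ne_zero hv fun h0 => by simpa [constantCoeff_shiftPS, hG] using congrArg constantCoeff h0
  have hcd' : shiftPS c R = shiftPS d R := by
    refine mul_left_cancel₀ hvG ?_
    rw [hG'R, shiftPS_mul, shiftPS_mul] at h'
    linear_combination shiftPS c R * h.symm + h'
  have hfix : shiftPS (d - c) R = R := by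
    have := congrArg (shiftPS (-c)) hcd'
    rwa [shiftPS_shiftPS, shiftPS_shiftPS, add_neg_cancel, shiftPS_zero, eq_comm,
      ← sub_eq_add_neg] at this
  rw [hG'R, eq_C_of_shiftPS_eq_self (sub_ne_zero.mpr hcd.symm) hfix, hR0, map_one, one_mul]

end Shift

theorem a01_functional_equation_and_uniqueness_general
    {F : Type*} [Field F] [CharZero F] (n : ℕ) (κ : F)
    (g h : ℕ → PowerSeries F)
    (hgconst : ∀ i, PowerSeries.constantCoeff (R := F) (g i) = 1)
    (hg0 : g 0 = 1)
    (hper : ∀ i : ℕ, g (i + n) = g n * (1 + C (R := F) κ * X) ^ i * shiftPS κ (g i))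
    (hrec : ∀ i : ℕ, 1 ≤ i →
      h i * ((1 + C (R := F) (((i:F) - 1)/2) * X) ^ i * shiftPS (((i:F) - 1)/2) (g i))
          * ((1 + C (R := F) (((i:F) + 1)/2) * X) ^ i * shiftPS (((i:F) + 1)/2) (g i))
        = ((1 + C (R := F) (((i:F) - 1)/2) * X) ^ (i - 1) * shiftPS (((i:F) - 1)/2) (g (i - 1)))
          * ((1 + C (R := F) (((i:F) + 1)/2) * X) ^ (i + 1) * shiftPS (((i:F) + 1)/2) (g (i + 1)))) :
    let funcEq : PowerSeries F → Prop := fun G =>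
      (1 + C (R := F) (-(n:F)) * X) * shiftPS (-(n:F)) G
          * ∏ j ∈ Finset.Icc 1 n, shiftPS (((j:F) - 1)/2 - n) (h j)
        = (1 + C (R := F) κ * X) * shiftPS κ G;
    funcEq (g 1)
    ∧ (κ ≠ -(n:F) → ∀ G G' : PowerSeries F,
        PowerSeries.constantCoeff (R := F) G = 1 → PowerSeries.constantCoeff (R := F) G' = 1 →
        funcEq G → funcEq G' → G = G') := by
  intro funcEq
  have hshifted (i : ℕ) :
      shiftPS ((((i + 1 : ℕ) : F) - 1) / 2 - n) (h (i + 1))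
          * shiftDeg (i + 1) ((i : F) - n) (g (i + 1))
          * shiftDeg (i + 1) (((i + 1 : ℕ) : F) - n) (g (i + 1))
        = shiftDeg i ((i : F) - n) (g i)
          * shiftDeg (i + 2) (((i + 1 : ℕ) : F) - n) (g (i + 2)) := by
    have H := shiftPS_mul_shiftDeg_mul_shiftDeg (by omega) (hrec (i + 1) (by omega))
      ((((i + 1 : ℕ) : F) - 1) / 2 - n)
    have hα : (((i + 1 : ℕ) : F) - 1) / 2 + ((((i + 1 : ℕ) : F) - 1) / 2 - n) = (i : F) - n := by
      push_cast; ring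
    have hβ : (((i + 1 : ℕ) : F) + 1) / 2 + ((((i + 1 : ℕ) : F) - 1) / 2 - n)
        = ((i + 1 : ℕ) : F) - n := by
      push_cast; ring
    rwa [hα, hβ, Nat.add_sub_cancel] at H
  have htel := Finset.prod_Icc_one_mul_mul_eq_of_mul_mul_eq
    (H := fun j => shiftPS (((j : F) - 1) / 2 - n) (h j))
    (a := fun i => shiftDeg i ((i : F) - n) (g i))
    (b := fun i => shiftDeg (i + 1) ((i : F) - n) (g (i + 1)))
    (fun i => shiftDeg_ne_zero _ _ (by simp [hgconst])) hshifted n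
  simp only [Nat.cast_zero, zero_sub, sub_self, shiftDeg_zero, hg0] at htel
  simp only [shiftDeg, zero_add, pow_zero, pow_one, one_mul, shiftPS_one] at htel
  have hper1 := hper 1
  rw [add_comm, pow_one] at hper1
  have hgn : g n ≠ 0 := fun h0 => by simpa [h0] using hgconst n
  refine ⟨mul_right_cancel₀ hgn ?_, fun hκ G G' hG hG' => eq_of_mul_shiftPS_mul_eq hκ.symm
    (one_add_C_mul_X_ne_zero κ) hG hG'⟩
  linear_combination htel + hper1

/-- writing `a_{0i}(u) = u^i g_i(u^{-1})` with `g_i = 1 + O(X)`, suppose the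
periodicity `a_{0,i+n}(u) a_{0,n}(u)^{-1} = a_{0i}(u+κ)` and the recursions
`h_i(u) = a_{0i}(u+(i-1)/2)^{-1} a_{0i}(u+(i+1)/2)^{-1} a_{0,i-1}(u+(i-1)/2) a_{0,i+1}(u+(i+1)/2)`
hold.  Then `a_{01}` satisfies the functional equation
`a_{01}(u-n) ∏_{j=1}^n h_j(u-n+(j-1)/2) = a_{01}(u+κ)`, and when `κ ≠ -n` this equation
uniquely determines `a_{01}` (among series of the fixed form) given the `h_j`. -/
theorem a01_functional_equation_and_uniqueness
    {F : Type*} [Field F] [CharZero F] (n : ℕ) (hn : 0 < n) (κ : F)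
    (g h : ℕ → PowerSeries F)
    (hgconst : ∀ i, PowerSeries.constantCoeff (R := F) (g i) = 1)
    (hg0 : g 0 = 1)
    (hper : ∀ i : ℕ, g (i + n) = g n * (1 + C (R := F) κ * X) ^ i * shiftPS κ (g i))
    (hrec : ∀ i : ℕ, 1 ≤ i →
      h i * ((1 + C (R := F) (((i:F) - 1)/2) * X) ^ i * shiftPS (((i:F) - 1)/2) (g i))
          * ((1 + C (R := F) (((i:F) + 1)/2) * X) ^ i * shiftPS (((i:F) + 1)/2) (g i))
        = ((1 + C (R := F) (((i:F) - 1)/2) * X) ^ (i - 1) * shiftPS (((i:F) - 1)/2) (g (i - 1)))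
          * ((1 + C (R := F) (((i:F) + 1)/2) * X) ^ (i + 1) * shiftPS (((i:F) + 1)/2) (g (i + 1)))) :
    let funcEq : PowerSeries F → Prop := fun G =>
      (1 + C (R := F) (-(n:F)) * X) * shiftPS (-(n:F)) G
          * ∏ j ∈ Finset.Icc 1 n, shiftPS (((j:F) - 1)/2 - n) (h j)
        = (1 + C (R := F) κ * X) * shiftPS κ G;
    funcEq (g 1)
    ∧ (κ ≠ -(n:F) → ∀ G G' : PowerSeries F,
        PowerSeries.constantCoeff (R := F) G = 1 → PowerSeries.constantCoeff (R := F) G' = 1 →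
        funcEq G → funcEq G' → G = G') :=
  a01_functional_equation_and_uniqueness_general n κ g h hgconst hg0 hper hrec
end

section
/- The eigenvalue of the series a_{0,n}(u) on the fixed-point basis vector [d] equals ∏_{j≤0} (u - p_{0j} + ℏ')·(u - p_{0j})^{-1}, and hence the eigenvalue of Φ_n(u) := ∂_u log a_{0,n}(u) on [d] equals ∑_{j≤0} [ (u - p_{0j} + ℏ')^{-1} - (u - p_{0j})^{-1} ]; expanding in u^{-1}, the first three coefficients are Φ_{n,1} = -∑_{j=1}^n x_j - nℏ', Φ_{n,2} = ∑_{j=1}^n (x_j + ℏ')² - 2ℏℏ'∑_{j≤0} d_{0j}, and Φ_{n,3} = -∑_{j=1}^n (x_j+ℏ')³ + 3ℏℏ'(2∑_{j=1}^n x_j ∑_{k ≡ j mod n, k≤0} d_{0k} - ∑_{j≤0} d_{0j}² ℏ - ∑_{j≤0} d_{0j}(2⌊-j/n⌋ - 1)ℏ'). -/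
/-!
By partial fractions, `-ℏ' X² (1 - (p - ℏ')X)⁻¹ (1 - pX)⁻¹ = X (1 - (p - ℏ')X)⁻¹ - X (1 - pX)⁻¹`,
so the coefficient of `X^(k+1)` in `Φ` is the power sum
`∑_{N ≤ j ≤ 0} ((p_j - ℏ')^k - p_j^k) + ∑_{N-n ≤ j < N} (p_j - ℏ')^k`.
Write `p_j = y_j + d_j ℏ`, where `y_j = -x_j + ⌊-j/n⌋ ℏ'` satisfies `y_{j+n} = y_j - ℏ'`.
The part not involving `d` telescopes to `∑_{m=1}^n y_m^k = ∑_{m=1}^n (-(x_m + ℏ'))^k`; what is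
left is a sum over `N ≤ j ≤ 0` of corrections polynomial in `y_j`, `d_j`, which for `k ≤ 3` are
explicit, and periodicity of `x` regroups `∑_j x_j d_j` by residues mod `n`.
-/

open PowerSeries Finset

section PowerSeries

variable {F : Type*} [Field F]

theorem inv_one_sub_C_mul_X (a : F) : (1 - C a * X)⁻¹ = mk (a ^ ·) := by
  have h := congrArg (rescale a) (mk_one_mul_one_sub_eq_one F)
  rw [map_mul, map_sub, map_one, rescale_X] at h
  rw [PowerSeries.inv_eq_iff_mul_eq_one (by simp)]
  convert h using 2
  ext k
  simp [coeff_rescale]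

theorem coeff_succ_X_mul_inv_one_sub_C_mul_X (a : F) (k : ℕ) :
    coeff (k + 1) (X * (1 - C a * X)⁻¹) = a ^ k := by
  rw [coeff_succ_X_mul, inv_one_sub_C_mul_X, coeff_mk]

theorem X_mul_inv_one_sub_C_mul_X_sub (a b : F) :
    X * (1 - C a * X)⁻¹ - X * (1 - C b * X)⁻¹
      = (a - b) • (X ^ 2 * ((1 - C a * X)⁻¹ * (1 - C b * X)⁻¹)) := by
  have ha := PowerSeries.mul_inv_cancel (1 - C a * X) (by simp)
  have hb := PowerSeries.mul_inv_cancel (1 - C b * X) (by simp)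
  rw [smul_eq_C_mul, map_sub]
  linear_combination (X * (1 - C b * X)⁻¹) * ha - (X * (1 - C a * X)⁻¹) * hb

theorem coeff_succ_sum_neg_smul_add_sum {ι : Type*} (s t : Finset ι) (p : ι → F) (c : F)
    (k : ℕ) :
    coeff (k + 1)
        (∑ j ∈ s, (-c) • (X ^ 2 * ((1 - C (p j - c) * X)⁻¹ * (1 - C (p j) * X)⁻¹))
          + ∑ j ∈ t, X * (1 - C (p j - c) * X)⁻¹)
      = ∑ j ∈ s, ((p j - c) ^ k - p j ^ k) + ∑ j ∈ t, (p j - c) ^ k := by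
  rw [map_add, map_sum, map_sum]
  congr 1 <;> refine sum_congr rfl fun j _ => ?_
  · rw [show -c = p j - c - p j by ring, ← X_mul_inv_one_sub_C_mul_X_sub, map_sub,
      coeff_succ_X_mul_inv_one_sub_C_mul_X, coeff_succ_X_mul_inv_one_sub_C_mul_X]
  · exact coeff_succ_X_mul_inv_one_sub_C_mul_X _ k

end PowerSeries

theorem Finset.sum_Ico_add_sub_self {M : Type*} [AddCommGroup M] (G : ℤ → M) {a b c : ℤ}
    (hab : a ≤ b) (hc : 0 ≤ c) :
    ∑ j ∈ Ico a b, (G (j + c) - G j) = ∑ j ∈ Ico b (b + c), G j - ∑ j ∈ Ico a (a + c), G j := by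
  have consecutive : ∀ {p q r : ℤ}, p ≤ q → q ≤ r →
      ∑ j ∈ Ico p q, G j + ∑ j ∈ Ico q r, G j = ∑ j ∈ Ico p r, G j := fun hpq hqr => by
    rw [← sum_union (Ico_disjoint_Ico_consecutive _ _ _), Ico_union_Ico_eq_Ico hpq hqr]
  have h1 := consecutive (by omega : a ≤ a + c) (by omega : a + c ≤ b + c)
  have h2 := consecutive hab (by omega : b ≤ b + c)
  rw [sum_sub_distrib, sum_Ico_add']
  linear_combination (norm := abel) h1 - h2

theorem sum_Icc_add_sub_self_add_sum_Icc {M : Type*} [AddCommGroup M] (G : ℤ → M) (n : ℕ) {N : ℤ}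
    (hN : N ≤ 1) :
    ∑ j ∈ Icc N 0, (G (j + n) - G j) + ∑ j ∈ Icc (N - n) (N - 1), G (j + n)
      = ∑ j ∈ Icc (1 : ℤ) n, G j := by
  simp only [← Ico_add_one_right_eq_Icc, zero_add, sub_add_cancel]
  rw [sum_Ico_add_sub_self G hN (by positivity), sum_Ico_add', sub_add_cancel, add_comm (1 : ℤ)]
  abel

theorem sum_Icc_mul_sum_filter_emod_eq {R : Type*} [NonUnitalNonAssocSemiring R] {x : ℤ → R}
    {n : ℕ} (hn : 0 < n) (hx : Function.Periodic x n) (s : Finset ℤ) (w : ℤ → R) :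
    ∑ m ∈ Icc (1 : ℤ) n, x m * ∑ j ∈ s with (j - m) % n = 0, w j = ∑ j ∈ s, x j * w j := by
  simp_rw [mul_sum, sum_filter]
  rw [sum_comm]
  refine sum_congr rfl fun j _ => ?_
  have hr := Int.emod_nonneg (j - 1) (by omega : (n : ℤ) ≠ 0)
  have hr' := Int.emod_lt_of_pos (j - 1) (by omega : (0 : ℤ) < n)
  have residue : ∀ m ∈ Icc (1 : ℤ) n, (j - m) % n = 0 ↔ (j - 1) % n + 1 = m := by
    intro m hm
    rw [mem_Icc] at hm
    rw [show j - m = (j - 1) - (m - 1) by ring, ← Int.emod_eq_emod_iff_emod_sub_eq_zero,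
      Int.emod_eq_of_lt (a := m - 1) (by omega) (by omega)]
    omega
  have hxj : x ((j - 1) % n + 1) = x j := by
    rw [← (hx.int_mul ((j - 1) / n)) ((j - 1) % n + 1)]
    congr 1
    rw [Int.cast_id]
    linarith [Int.emod_add_mul_ediv (j - 1) n]
  rw [sum_congr rfl fun m hm => if_congr (residue m hm) rfl rfl, sum_ite_eq,
    if_pos (mem_Icc.2 ⟨by omega, by omega⟩), hxj]

theorem Int.fdiv_neg_add_self {n : ℤ} (hn : n ≠ 0) (j : ℤ) :
    Int.fdiv (-(j + n)) n = Int.fdiv (-j) n - 1 := by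
  rw [show -(j + n) = -j + -1 * n by ring, Int.add_mul_fdiv_right _ _ hn, sub_eq_add_neg]

theorem Int.fdiv_neg_eq_neg_one_of_pos_of_le {m n : ℤ} (hm : 0 < m) (hmn : m ≤ n) :
    Int.fdiv (-m) n = -1 := by
  rw [show -m = (n - m) + -1 * n by ring, Int.add_mul_fdiv_right _ _ (by omega),
    Int.fdiv_eq_ediv_of_nonneg _ (by omega), Int.ediv_eq_zero_of_lt (by omega) (by omega), zero_add]

theorem neg_add_fdiv_neg_mul_add_self {R : Type*} [Ring R] {x : ℤ → R} {n : ℕ} (hn : n ≠ 0)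
    (hx : Function.Periodic x n) (c : R) (j : ℤ) :
    -x (j + n) + (Int.fdiv (-(j + n)) n : R) * c = -x j + (Int.fdiv (-j) n : R) * c - c := by
  rw [hx, Int.fdiv_neg_add_self (by omega)]
  push_cast
  noncomm_ring

theorem neg_add_fdiv_neg_mul_of_mem_Icc {R : Type*} [Ring R] (x : ℤ → R) {n : ℕ} (c : R) {m : ℤ}
    (hm : m ∈ Icc (1 : ℤ) n) : -x m + (Int.fdiv (-m) n : R) * c = -(x m + c) := by
  rw [mem_Icc] at hm
  rw [Int.fdiv_neg_eq_neg_one_of_pos_of_le (by omega) hm.2]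
  push_cast
  noncomm_ring

theorem sum_Icc_pow_sub_pow_add_sum_Icc_pow {R : Type*} [CommRing R] {y e : ℤ → R} {c : R}
    {n : ℕ} {N : ℤ} (hy : ∀ j, y (j + n) = y j - c) (he : ∀ j < N, e j = 0) (hN : N ≤ 1)
    (k : ℕ) :
    ∑ j ∈ Icc N 0, ((y j + e j - c) ^ k - (y j + e j) ^ k)
        + ∑ j ∈ Icc (N - n) (N - 1), (y j + e j - c) ^ k
      = ∑ m ∈ Icc (1 : ℤ) n, y m ^ k
        + ∑ j ∈ Icc N 0, ((y j - c + e j) ^ k - (y j - c) ^ k - ((y j + e j) ^ k - y j ^ k)) := by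
  have below : ∑ j ∈ Icc (N - n) (N - 1), (y j + e j - c) ^ k
      = ∑ j ∈ Icc (N - n) (N - 1), y (j + n) ^ k :=
    sum_congr rfl fun j hj => by rw [he j (by grind), hy, add_zero]
  have above : ∑ j ∈ Icc N 0, ((y j + e j - c) ^ k - (y j + e j) ^ k)
      = ∑ j ∈ Icc N 0, (y (j + n) ^ k - y j ^ k)
        + ∑ j ∈ Icc N 0, ((y j - c + e j) ^ k - (y j - c) ^ k - ((y j + e j) ^ k - y j ^ k)) := by
    rw [← sum_add_distrib]
    exact sum_congr rfl fun j _ => by rw [hy]; ring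
  rw [below, above, add_right_comm, sum_Icc_add_sub_self_add_sum_Icc (y · ^ k) n hN]

open PowerSeries in
theorem noncommutative_power_sum_coefficients_general
    {F : Type*} [Field F]
    (n : ℕ) (hn : 0 < n) (hbar hbar' : F)
    (x : ℤ → F) (hx : ∀ j : ℤ, x (j + n) = x j)
    (N : ℤ) (hN : N ≤ 0) (d : ℤ → ℕ) (hd : ∀ j : ℤ, j < N → d j = 0)
    (p : ℤ → F)
    (hp : ∀ j : ℤ, p j = -x j + (d j : F) * hbar + ((Int.fdiv (-j) (n:ℤ) : ℤ) : F) * hbar') :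
    let Φ : PowerSeries F :=
      (∑ j ∈ Finset.Icc N 0,
        (-hbar') • (X ^ 2 * ((1 - C (p j - hbar') * X)⁻¹ * (1 - C (p j) * X)⁻¹)))
      + ∑ j ∈ Finset.Icc (N - n) (N - 1), X * (1 - C (p j - hbar') * X)⁻¹;
    (PowerSeries.coeff 2 Φ = -(∑ m ∈ Finset.Icc (1:ℤ) n, x m) - n * hbar')
    ∧ (PowerSeries.coeff 3 Φ
        = ∑ m ∈ Finset.Icc (1:ℤ) n, (x m + hbar')^2
          - 2 * hbar * hbar' * ∑ j ∈ Finset.Icc N 0, (d j : F))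
    ∧ (PowerSeries.coeff 4 Φ
        = -(∑ m ∈ Finset.Icc (1:ℤ) n, (x m + hbar')^3)
          + 3 * hbar * hbar' *
            (2 * ∑ m ∈ Finset.Icc (1:ℤ) n, x m *
                (∑ j ∈ (Finset.Icc N 0).filter (fun j => (j - m) % (n:ℤ) = 0), (d j : F))
              - (∑ j ∈ Finset.Icc N 0, (d j : F)^2) * hbar
              - (∑ j ∈ Finset.Icc N 0,
                  (d j : F) * (2 * ((Int.fdiv (-j) (n:ℤ) : ℤ) : F) - 1)) * hbar')) := by
  intro Φ
  set y : ℤ → F := fun j => -x j + ((Int.fdiv (-j) (n : ℤ) : ℤ) : F) * hbar' with hy_def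
  have hy : ∀ j, y (j + n) = y j - hbar' := neg_add_fdiv_neg_mul_add_self hn.ne' hx hbar'
  have hΦ : ∀ k, coeff (k + 1) Φ = ∑ m ∈ Icc (1 : ℤ) n, (-(x m + hbar')) ^ k
      + ∑ j ∈ Icc N 0, ((y j - hbar' + d j * hbar) ^ k - (y j - hbar') ^ k
          - ((y j + d j * hbar) ^ k - y j ^ k)) := fun k => by
    have hp' : ∀ j, p j = y j + d j * hbar := fun j => by rw [hp, hy_def]; ring
    simp only [Φ, coeff_succ_sum_neg_smul_add_sum, hp']
    rw [sum_Icc_pow_sub_pow_add_sum_Icc_pow (e := fun j => (d j : F) * hbar) hy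
      (fun j hj => by simp [hd j hj]) (by omega) k]
    congr 1
    exact sum_congr rfl fun m hm => congrArg (· ^ k) (neg_add_fdiv_neg_mul_of_mem_Icc x hbar' hm)
  refine ⟨(hΦ 1).trans ?_, (hΦ 2).trans ?_, (hΦ 3).trans ?_⟩
  · simp only [pow_one, neg_add_rev, sum_add_distrib, sum_neg_distrib, sum_const, Int.card_Icc,
      add_sub_cancel_right, Int.toNat_natCast, nsmul_eq_mul, add_sub_cancel_left, sub_self]
    ring
  · have corr : ∀ j, (y j - hbar' + d j * hbar) ^ 2 - (y j - hbar') ^ 2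
        - ((y j + d j * hbar) ^ 2 - y j ^ 2) = -(2 * hbar * hbar' * d j) := fun j => by ring
    simp only [corr, sum_neg_distrib, ← mul_sum, neg_sq]
    ring
  · have corr : ∀ j, (y j - hbar' + d j * hbar) ^ 3 - (y j - hbar') ^ 3
        - ((y j + d j * hbar) ^ 3 - y j ^ 3)
          = 3 * hbar * hbar' * (2 * (x j * d j) - (d j : F) ^ 2 * hbar
            - d j * (2 * ((Int.fdiv (-j) (n : ℤ) : ℤ) : F) - 1) * hbar') := fun j => by
      rw [hy_def]; ring
    rw [sum_Icc_mul_sum_filter_emod_eq hn hx]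
    simp only [corr, ← mul_sum, sum_sub_distrib, ← sum_mul, Odd.neg_pow (by decide : Odd 3),
      sum_neg_distrib]

open PowerSeries in
/-- The eigenvalue of `Φ_n(u) = ∂_u log a_{0,n}(u)` on the fixed point `[d]`
equals `∑_{j≤0} [(u - p_{0j} + ℏ')^{-1} - (u - p_{0j})^{-1}]`, which telescopes (with `N`
minimal such that `d_{0N} ≠ 0`) to the finite expression
`∑_{N≤j≤0} -ℏ'u^{-2}(1-(p_{0j}-ℏ')u^{-1})^{-1}(1-p_{0j}u^{-1})^{-1}
 + ∑_{N-n≤j≤N-1} u^{-1}(1-(p_{0j}-ℏ')u^{-1})^{-1}`;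
its first three coefficients, as a series `∑_{r≥1} Φ_{n,r} u^{-r-1}` in `u^{-1}`, are
`Φ_{n,1}, Φ_{n,2}, Φ_{n,3}` as stated. -/
theorem noncommutative_power_sum_coefficients
    {F : Type*} [Field F] [CharZero F]
    (n : ℕ) (hn : 0 < n) (hbar hbar' : F)
    (x : ℤ → F) (hx : ∀ j : ℤ, x (j + n) = x j)
    (N : ℤ) (hN : N ≤ 0) (d : ℤ → ℕ) (hdN : d N ≠ 0) (hd : ∀ j : ℤ, j < N → d j = 0)
    (p : ℤ → F)
    (hp : ∀ j : ℤ, p j = -x j + (d j : F) * hbar + ((Int.fdiv (-j) (n:ℤ) : ℤ) : F) * hbar') :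
    let Φ : PowerSeries F :=
      (∑ j ∈ Finset.Icc N 0,
        (-hbar') • (X ^ 2 * ((1 - C (p j - hbar') * X)⁻¹ * (1 - C (p j) * X)⁻¹)))
      + ∑ j ∈ Finset.Icc (N - n) (N - 1), X * (1 - C (p j - hbar') * X)⁻¹;
    (PowerSeries.coeff 2 Φ = -(∑ m ∈ Finset.Icc (1:ℤ) n, x m) - n * hbar')
    ∧ (PowerSeries.coeff 3 Φ
        = ∑ m ∈ Finset.Icc (1:ℤ) n, (x m + hbar')^2
          - 2 * hbar * hbar' * ∑ j ∈ Finset.Icc N 0, (d j : F))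
    ∧ (PowerSeries.coeff 4 Φ
        = -(∑ m ∈ Finset.Icc (1:ℤ) n, (x m + hbar')^3)
          + 3 * hbar * hbar' *
            (2 * ∑ m ∈ Finset.Icc (1:ℤ) n, x m *
                (∑ j ∈ (Finset.Icc N 0).filter (fun j => (j - m) % (n:ℤ) = 0), (d j : F))
              - (∑ j ∈ Finset.Icc N 0, (d j : F)^2) * hbar
              - (∑ j ∈ Finset.Icc N 0,
                  (d j : F) * (2 * ((Int.fdiv (-j) (n:ℤ) : ℤ) : F) - 1)) * hbar')) :=
  noncommutative_power_sum_coefficients_general n hn hbar hbar' x hx N hN d hd p hp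
end

section
/- With Φ_{n,1}, Φ_{n,2}, Φ_{n,3} given by their eigenvalue formulas on [d] (depending on the pattern entries d_{0j} and parameters x_j, ℏ, ℏ'), the combination (1/(12ℏℏ'))·(-2Φ_{n,3} + 3(ℏ-ℏ')Φ_{n,2} - 2∑_{j=1}^n (x_j+ℏ')³ - 3(ℏ-ℏ')∑_{j=1}^n (x_j+ℏ')²) + ∑_{j=1}^n x_j equals the torus weight ∑_{j=1}^n x_j(1 - ∑_{k≡j mod n} d_{0k}) + (ℏ/2)∑_{j≤0} d_{0j}(d_{0j}-1) + ℏ'∑_{j≤0} d_{0j}⌊-j/n⌋ of the determinant line bundle at the fixed point d, i.e., the first Chern class of D_0 acts by this expression in the Gelfand–Tsetlin elements. -/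
/-!
In the combination the power sums `∑ (x_j + ℏ')ᵏ` cancel, so only the `ℏℏ'`-corrections of
`Φ_{n,2}` and `Φ_{n,3}` survive. Once the sums over `d` are split termwise, these corrections are
`ℏℏ'` times a linear form in `∑ x_j ∑_{k ≡ j} d_{0k}`, `∑ d_{0j}²`, `∑ d_{0j}` and
`∑ d_{0j}⌊-j/n⌋`, and dividing by `12ℏℏ'` leaves exactly the weight, read with
`d(d - 1) = d² - d`.
-/

theorem center_combination_eq {F : Type*} [Field F] [CharZero F] {hbar hbar' : F}
    (hb0 : hbar ≠ 0) (hb0' : hbar' ≠ 0) (S2 S3 X A Q D B : F) :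
    (1 / (12 * hbar * hbar')) *
        (-2 * (-S3 + 3 * hbar * hbar' * (2 * A - Q * hbar - (2 * B - D) * hbar'))
          + 3 * (hbar - hbar') * (S2 - 2 * hbar * hbar' * D)
          - 2 * S3 - 3 * (hbar - hbar') * S2) + X
      = X - A + hbar / 2 * (Q - D) + hbar' * B := by
  field_simp
  ring

theorem det_line_bundle_weight_from_center_general
    {F : Type*} [Field F] [CharZero F]
    (n : ℕ) (hbar hbar' : F) (hb0 : hbar ≠ 0) (hb0' : hbar' ≠ 0)
    (x : ℤ → F)
    (N : ℤ) (d : ℤ → ℕ) :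
    let Phi2 : F := (∑ m ∈ Finset.Icc (1:ℤ) n, (x m + hbar')^2)
      - 2 * hbar * hbar' * ∑ j ∈ Finset.Icc N 0, (d j : F);
    let Phi3 : F := -(∑ m ∈ Finset.Icc (1:ℤ) n, (x m + hbar')^3)
      + 3 * hbar * hbar' *
        (2 * ∑ m ∈ Finset.Icc (1:ℤ) n, x m *
            (∑ j ∈ (Finset.Icc N 0).filter (fun j => (j - m) % (n:ℤ) = 0), (d j : F))
          - (∑ j ∈ Finset.Icc N 0, (d j : F)^2) * hbar
          - (∑ j ∈ Finset.Icc N 0,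
              (d j : F) * (2 * ((Int.fdiv (-j) (n:ℤ) : ℤ) : F) - 1)) * hbar');
    (1 / (12 * hbar * hbar')) *
        (-2 * Phi3 + 3 * (hbar - hbar') * Phi2
          - 2 * ∑ m ∈ Finset.Icc (1:ℤ) n, (x m + hbar')^3
          - 3 * (hbar - hbar') * ∑ m ∈ Finset.Icc (1:ℤ) n, (x m + hbar')^2)
      + ∑ m ∈ Finset.Icc (1:ℤ) n, x m
    = ∑ m ∈ Finset.Icc (1:ℤ) n,
        x m * (1 - ∑ j ∈ (Finset.Icc N 0).filter (fun j => (j - m) % (n:ℤ) = 0), (d j : F))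
      + (hbar / 2) * ∑ j ∈ Finset.Icc N 0, (d j : F) * ((d j : F) - 1)
      + hbar' * ∑ j ∈ Finset.Icc N 0, (d j : F) * ((Int.fdiv (-j) (n:ℤ) : ℤ) : F) := by
  intro Phi2 Phi3
  simp only [Phi2, Phi3, mul_one_sub, mul_sub_one, mul_left_comm _ (2 : F), ← Finset.mul_sum,
    Finset.sum_sub_distrib, ← sq]
  exact center_combination_eq hb0 hb0' _ _ _ _ _ _ _

/-- With `Φ_{n,2}, Φ_{n,3}` given by their eigenvalue formulas on the fixed
point `[d]` (in terms of the pattern entries `d_{0j}` and the parameters `x_j, ℏ, ℏ'`),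
the combination
`(1/(12ℏℏ'))(-2Φ_{n,3} + 3(ℏ-ℏ')Φ_{n,2} - 2∑(x_j+ℏ')³ - 3(ℏ-ℏ')∑(x_j+ℏ')²) + ∑ x_j`
equals the torus weight of the determinant line bundle `D_0` at `[d]`. -/
theorem det_line_bundle_weight_from_center
    {F : Type*} [Field F] [CharZero F]
    (n : ℕ) (hn : 0 < n) (hbar hbar' : F) (hb0 : hbar ≠ 0) (hb0' : hbar' ≠ 0)
    (x : ℤ → F) (hx : ∀ j : ℤ, x (j + n) = x j)
    (N : ℤ) (hN : N ≤ 0) (d : ℤ → ℕ) (hd : ∀ j : ℤ, j < N → d j = 0) :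
    let Phi2 : F := (∑ m ∈ Finset.Icc (1:ℤ) n, (x m + hbar')^2)
      - 2 * hbar * hbar' * ∑ j ∈ Finset.Icc N 0, (d j : F);
    let Phi3 : F := -(∑ m ∈ Finset.Icc (1:ℤ) n, (x m + hbar')^3)
      + 3 * hbar * hbar' *
        (2 * ∑ m ∈ Finset.Icc (1:ℤ) n, x m *
            (∑ j ∈ (Finset.Icc N 0).filter (fun j => (j - m) % (n:ℤ) = 0), (d j : F))
          - (∑ j ∈ Finset.Icc N 0, (d j : F)^2) * hbar
          - (∑ j ∈ Finset.Icc N 0,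
              (d j : F) * (2 * ((Int.fdiv (-j) (n:ℤ) : ℤ) : F) - 1)) * hbar');
    (1 / (12 * hbar * hbar')) *
        (-2 * Phi3 + 3 * (hbar - hbar') * Phi2
          - 2 * ∑ m ∈ Finset.Icc (1:ℤ) n, (x m + hbar')^3
          - 3 * (hbar - hbar') * ∑ m ∈ Finset.Icc (1:ℤ) n, (x m + hbar')^2)
      + ∑ m ∈ Finset.Icc (1:ℤ) n, x m
    = ∑ m ∈ Finset.Icc (1:ℤ) n,
        x m * (1 - ∑ j ∈ (Finset.Icc N 0).filter (fun j => (j - m) % (n:ℤ) = 0), (d j : F))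
      + (hbar / 2) * ∑ j ∈ Finset.Icc N 0, (d j : F) * ((d j : F) - 1)
      + hbar' * ∑ j ∈ Finset.Icc N 0, (d j : F) * ((Int.fdiv (-j) (n:ℤ) : ℤ) : F) :=
  det_line_bundle_weight_from_center_general n hbar hbar' hb0 hb0' x N d
end
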